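/- arXiv:2103.09261 — 6 statements merged into one kernel-verified Lean document; each statement's English description precedes it below -/
import Mathlib

section
/- If a ∈ H^∞ is an outer function (so that aH² is dense in H²), then the set ℂ + J(aH²) = { c + J(a·g) : c ∈ ℂ, g ∈ H² } is dense in H², where J is the antiderivative operator (Jh)(z) = ∫₀^z h(w) dw. -/
open Metric ComplexConjugate

noncomputable abbrev H2 : Type := lp (fun _ : ℕ => ℂ) 2

noncomputable def hardyEval (h : H2) (z : ℂ) : ℂ := ∑' n : ℕ, h n * z ^ n

/-! The map `(c, h) ↦ c + J h` is a bounded linear map `ℂ × H² → H²`: `J` shifts the Taylor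
coefficients and divides them by `n + 1`, so `‖J h‖ ≤ ‖h‖`. Its range contains every monomial
`zⁿ` (`z⁰` as a constant, `zⁿ⁺¹ = J ((n + 1) zⁿ)`), hence is dense, and a continuous map with
dense range sends the dense set `ℂ × aH²` onto a dense set. -/

namespace H2

noncomputable def antiderivCoeff (x : ℕ → ℂ) : ℕ → ℂ
  | 0 => 0
  | n + 1 => x n / (n + 1)

@[simp] lemma antiderivCoeff_zero (x : ℕ → ℂ) : antiderivCoeff x 0 = 0 := rfl

@[simp] lemma antiderivCoeff_succ (x : ℕ → ℂ) (n : ℕ) :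
    antiderivCoeff x (n + 1) = x n / (n + 1) := rfl

lemma norm_antiderivCoeff_succ_le (x : ℕ → ℂ) (n : ℕ) :
    ‖antiderivCoeff x (n + 1)‖ ≤ ‖x n‖ := by
  rw [antiderivCoeff_succ, norm_div]
  exact div_le_self (norm_nonneg _) (by norm_cast; simp)

lemma summable_norm_antiderivCoeff_rpow {p : ENNReal} (hp : 0 < p.toReal) {x : ℕ → ℂ}
    (hx : Memℓp x p) : Summable (fun n => ‖antiderivCoeff x n‖ ^ p.toReal) := by
  refine (summable_nat_add_iff 1).1
    (Summable.of_nonneg_of_le (fun n => by positivity) (fun n => ?_) (hx.summable hp))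
  gcongr
  exact norm_antiderivCoeff_succ_le x n

lemma tsum_norm_antiderivCoeff_rpow_le {p : ENNReal} (hp : 0 < p.toReal) {x : ℕ → ℂ}
    (hx : Memℓp x p) : ∑' n, ‖antiderivCoeff x n‖ ^ p.toReal ≤ ∑' n, ‖x n‖ ^ p.toReal := by
  rw [(summable_norm_antiderivCoeff_rpow hp hx).tsum_eq_zero_add, antiderivCoeff_zero, norm_zero,
    Real.zero_rpow hp.ne', zero_add]
  refine ((summable_nat_add_iff 1).2 (summable_norm_antiderivCoeff_rpow hp hx)).tsum_le_tsum
    (fun n => ?_) (hx.summable hp)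
  gcongr
  exact norm_antiderivCoeff_succ_le x n

lemma memℓp_antiderivCoeff {p : ENNReal} (hp : 0 < p.toReal) {x : ℕ → ℂ} (hx : Memℓp x p) :
    Memℓp (antiderivCoeff x) p :=
  (memℓp_gen_iff hp).2 (summable_norm_antiderivCoeff_rpow hp hx)

lemma antiderivCoeff_add (x y : ℕ → ℂ) :
    antiderivCoeff (x + y) = antiderivCoeff x + antiderivCoeff y := by
  ext (_ | n)
  · simp
  · simp [add_div]

lemma antiderivCoeff_smul (c : ℂ) (x : ℕ → ℂ) :
    antiderivCoeff (c • x) = c • antiderivCoeff x := by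
  ext (_ | n)
  · simp
  · simp [mul_div_assoc]

noncomputable def antideriv : H2 →L[ℂ] H2 :=
  LinearMap.mkContinuous
    { toFun := fun x => ⟨antiderivCoeff x, memℓp_antiderivCoeff (by norm_num) (lp.memℓp x)⟩
      map_add' := fun x y => lp.ext (antiderivCoeff_add x y)
      map_smul' := fun c x => lp.ext (antiderivCoeff_smul c x) }
    1 (fun x => by
      rw [one_mul]
      have hp : 0 < (2 : ENNReal).toReal := by norm_num
      exact lp.norm_le_of_tsum_le hp (norm_nonneg x) <|
        (tsum_norm_antiderivCoeff_rpow_le hp (lp.memℓp x)).trans_eq (lp.norm_rpow_eq_tsum hp x).symm)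

@[simp] lemma antideriv_apply (x : H2) (n : ℕ) : antideriv x n = antiderivCoeff x n := rfl

lemma antideriv_single (n : ℕ) (c : ℂ) :
    antideriv (lp.single 2 n c) = lp.single 2 (n + 1) (c / (n + 1)) := by
  ext (_ | m)
  · simp [lp.single_apply]
  · by_cases h : m = n <;> simp [lp.single_apply, h]

noncomputable def constAddAntideriv : ℂ × H2 →L[ℂ] H2 :=
  (lp.singleContinuousLinearMap ℂ (fun _ : ℕ => ℂ) 2 0).coprod antideriv

@[simp] lemma constAddAntideriv_apply (c : ℂ) (h : H2) :
    constAddAntideriv (c, h) = lp.single 2 0 c + antideriv h := rfl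

lemma single_mem_range_constAddAntideriv (n : ℕ) (c : ℂ) :
    (lp.single 2 n c : H2) ∈ LinearMap.range constAddAntideriv.toLinearMap := by
  cases n with
  | zero => exact ⟨(c, 0), by simp⟩
  | succ n => exact ⟨(0, lp.single 2 n ((n + 1) * c)), by
      simp [antideriv_single, mul_div_cancel_left₀ c (Nat.cast_add_one_ne_zero n)]⟩

lemma denseRange_constAddAntideriv : DenseRange constAddAntideriv := by
  intro f
  refine mem_closure_of_tendsto (lp.hasSum_single ENNReal.ofNat_ne_top f)
    (Filter.Eventually.of_forall fun s => ?_)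
  exact Submodule.sum_mem _ fun n _ => single_mem_range_constAddAntideriv n (f n)

end H2

theorem dense_C_plus_J_aH2_general (a : ℂ → ℂ)
    (ha_outer : Dense {g : H2 | ∃ h : H2, ∀ z ∈ ball (0 : ℂ) 1,
      hardyEval g z = a z * hardyEval h z}) :
    Dense {g : H2 | ∃ c : ℂ, ∃ h : H2,
      (∃ h' : H2, ∀ z ∈ ball (0 : ℂ) 1, hardyEval h z = a z * hardyEval h' z) ∧
      g 0 = c ∧ ∀ n : ℕ, g (n + 1) = h n / ((n : ℂ) + 1)} := by
  refine (H2.denseRange_constAddAntideriv.dense_image H2.constAddAntideriv.continuous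
    (dense_univ.prod ha_outer)).mono ?_
  rintro _ ⟨⟨c, h⟩, ⟨-, h_mem⟩, rfl⟩
  exact ⟨c, h, h_mem, by simp, fun n => by simp [lp.single_apply]⟩

/-- If `a ∈ H^∞` is outer (i.e. `aH²` is dense in `H²`), then `ℂ + J(aH²)` is dense
in `H²`, where `J` is the antiderivative operator acting on Taylor coefficients by
`(Jh)₀ = 0`, `(Jh)_{n+1} = hₙ/(n+1)`. -/
theorem dense_C_plus_J_aH2 (a : ℂ → ℂ)
    (ha_an : AnalyticOnNhd ℂ a (ball (0 : ℂ) 1))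
    (ha_bdd : ∃ M : ℝ, ∀ z ∈ ball (0 : ℂ) 1, ‖a z‖ ≤ M)
    (ha_outer : Dense {g : H2 | ∃ h : H2, ∀ z ∈ ball (0 : ℂ) 1,
      hardyEval g z = a z * hardyEval h z}) :
    Dense {g : H2 | ∃ c : ℂ, ∃ h : H2,
      (∃ h' : H2, ∀ z ∈ ball (0 : ℂ) 1, hardyEval h z = a z * hardyEval h' z) ∧
      g 0 = c ∧ ∀ n : ℕ, g (n + 1) = h n / ((n : ℂ) + 1)} :=
  dense_C_plus_J_aH2_general a ha_outer
end

section
/- Let f = b/a be a function in the Smirnov class N⁺, with b, a ∈ H^∞ and a outer. Then the Liouville operator A_f, defined by A_f g = f·g′ on the domain D(A_f) = { g ∈ H² : f·g′ ∈ H² }, is densely defined; in fact its domain contains the dense subspace ℂ + J(aH²). -/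
open Metric ComplexConjugate

namespace LiouvilleAux

open Complex MeasureTheory intervalIntegral Finset Real
open scoped ENNReal NNReal

set_option maxHeartbeats 1000000

lemma ortho (n m : ℕ) :
    (∫ θ in (0:ℝ)..(2*Real.pi), Complex.exp (((n:ℂ) - m) * θ * Complex.I))
      = if n = m then (2*Real.pi : ℂ) else 0 := by
  by_cases h : n = m
  · subst h
    simp [Complex.ext_iff, Real.pi_pos.le]
  · rw [if_neg h]
    have hw : ((n:ℂ) - m) ≠ 0 := sub_ne_zero.2 (by exact_mod_cast h)
    have hc : ((n:ℂ) - m) * Complex.I ≠ 0 := mul_ne_zero hw Complex.I_ne_zero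
    have : ∀ θ : ℝ, ((n:ℂ) - m) * θ * Complex.I = (((n:ℂ) - m) * Complex.I) * θ := by
      intro θ; ring
    simp_rw [this]
    rw [integral_exp_mul_complex hc]
    have h1 : (((n:ℂ) - m) * Complex.I) * (2*Real.pi : ℝ)
        = ((n:ℤ) - (m:ℤ) : ℤ) * (2 * Real.pi * Complex.I) := by push_cast; ring
    rw [h1, Complex.exp_int_mul_two_pi_mul_I]
    simp

lemma norm_exp_real_mul_I (x : ℝ) (w : ℂ) (hw : w.im = 0) :
    ‖Complex.exp (w * x * Complex.I)‖ = 1 := by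
  rw [Complex.norm_exp]
  have : (w * (x:ℂ) * Complex.I).re = 0 := by
    simp [Complex.mul_re, Complex.mul_im, hw]
  rw [this, Real.exp_zero]

lemma parseval {c : ℕ → ℂ} (hc : Summable fun n => ‖c n‖) :
    ∫ θ in (0:ℝ)..(2*Real.pi), ‖∑' n : ℕ, c n * Complex.exp (n * θ * Complex.I)‖^2
      = 2*Real.pi * ∑' n : ℕ, ‖c n‖^2 := by
  have h2π : (0:ℝ) ≤ 2*Real.pi := by positivity
  set S : ℝ → ℂ := fun θ => ∑' n : ℕ, c n * Complex.exp (n * θ * Complex.I) with hS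
  -- norm facts
  have hnorm1 : ∀ (n : ℕ) (θ : ℝ), ‖c n * Complex.exp (n * θ * Complex.I)‖ = ‖c n‖ := by
    intro n θ
    rw [norm_mul, norm_exp_real_mul_I θ (n:ℂ) (by simp), mul_one]
  have hnorm2 : ∀ (m : ℕ) (θ : ℝ),
      ‖(starRingEnd ℂ) (c m) * Complex.exp ((-(m:ℂ)) * θ * Complex.I)‖ = ‖c m‖ := by
    intro m θ
    rw [norm_mul, norm_exp_real_mul_I θ (-(m:ℂ)) (by simp), mul_one, RCLike.norm_conj]
  have hsum1 : ∀ θ : ℝ, Summable fun n : ℕ => ‖c n * Complex.exp (n * θ * Complex.I)‖ := by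
    intro θ; simpa only [hnorm1] using hc
  have hsum2 : ∀ θ : ℝ,
      Summable fun m : ℕ => ‖(starRingEnd ℂ) (c m) * Complex.exp ((-(m:ℂ)) * θ * Complex.I)‖ := by
    intro θ; simpa only [hnorm2] using hc
  -- pointwise expansion of |S θ|^2 as a double series
  have h1 : ∀ θ : ℝ, ((‖S θ‖^2 : ℝ) : ℂ)
      = ∑' p : ℕ × ℕ, c p.1 * (starRingEnd ℂ) (c p.2)
          * Complex.exp (((p.1:ℂ) - p.2) * θ * Complex.I) := by
    intro θ
    have e1 : ((‖S θ‖^2 : ℝ) : ℂ) = S θ * (starRingEnd ℂ) (S θ) := by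
      rw [Complex.mul_conj, Complex.sq_norm]
    have e2 : (starRingEnd ℂ) (S θ)
        = ∑' m : ℕ, (starRingEnd ℂ) (c m) * Complex.exp ((-(m:ℂ)) * θ * Complex.I) := by
      rw [hS]
      rw [show ((starRingEnd ℂ) (∑' n : ℕ, c n * Complex.exp (n * θ * Complex.I)))
          = star (∑' n : ℕ, c n * Complex.exp (n * θ * Complex.I)) from rfl, tsum_star]
      refine tsum_congr fun m => ?_
      rw [star_mul']
      congr 1
      rw [show (star (Complex.exp ((m:ℂ) * θ * Complex.I)))
          = (starRingEnd ℂ) (Complex.exp ((m:ℂ) * θ * Complex.I)) from rfl,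
        ← Complex.exp_conj]
      congr 1
      simp
    rw [e1, e2, hS]
    rw [tsum_mul_tsum_of_summable_norm (hsum1 θ) (hsum2 θ)]
    refine tsum_congr fun p => ?_
    rw [mul_mul_mul_comm, ← Complex.exp_add]
    congr 2
    push_cast
    ring
  -- the complex integral
  have key : (∫ θ in (0:ℝ)..(2*Real.pi), ((‖S θ‖^2 : ℝ) : ℂ))
      = (2*Real.pi : ℂ) * ∑' n : ℕ, ((‖c n‖^2 : ℝ) : ℂ) := by
    have hcont : ∀ p : ℕ × ℕ, Continuous (fun θ : ℝ =>
        c p.1 * (starRingEnd ℂ) (c p.2) * Complex.exp (((p.1:ℂ) - p.2) * θ * Complex.I)) := by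
      intro p
      exact continuous_const.mul (Complex.continuous_exp.comp (by fun_prop))
    have hnorm3 : ∀ (p : ℕ × ℕ) (θ : ℝ),
        ‖c p.1 * (starRingEnd ℂ) (c p.2) * Complex.exp (((p.1:ℂ) - p.2) * θ * Complex.I)‖
          = ‖c p.1‖ * ‖c p.2‖ := by
      intro p θ
      rw [norm_mul, norm_mul, norm_exp_real_mul_I θ _ (by simp), mul_one, RCLike.norm_conj]
    simp_rw [h1]
    rw [intervalIntegral.integral_of_le h2π]
    rw [MeasureTheory.integral_tsum (fun p => ((hcont p).aestronglyMeasurable))]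
    · have hint : ∀ p : ℕ × ℕ, (∫ θ in Set.Ioc (0:ℝ) (2*Real.pi),
          c p.1 * (starRingEnd ℂ) (c p.2) * Complex.exp (((p.1:ℂ) - p.2) * θ * Complex.I))
          = c p.1 * (starRingEnd ℂ) (c p.2) * (if p.1 = p.2 then (2*Real.pi : ℂ) else 0) := by
        intro p
        rw [← intervalIntegral.integral_of_le h2π, intervalIntegral.integral_const_mul, ortho]
      simp_rw [hint]
      -- reduce double sum to diagonal
      have hdiag : (∑' p : ℕ × ℕ, c p.1 * (starRingEnd ℂ) (c p.2)
            * (if p.1 = p.2 then (2*Real.pi : ℂ) else 0))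
          = ∑' n : ℕ, c n * (starRingEnd ℂ) (c n) * (2*Real.pi : ℂ) := by
        refine tsum_eq_tsum_of_ne_zero_bij (fun x => ((x : ℕ), (x : ℕ))) ?_ ?_ ?_
        · intro x y hxy
          simp only [Prod.mk.injEq] at hxy
          exact Subtype.ext hxy.1
        · rintro ⟨n, m⟩ hp
          simp only [Function.mem_support, ne_eq] at hp
          by_cases h : n = m
          · subst h
            refine ⟨⟨n, ?_⟩, rfl⟩
            simpa [if_pos rfl] using hp
          · exact absurd (by simp [if_neg h]) hp
        · intro x
          simp
      rw [hdiag]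
      have : ∀ n : ℕ, c n * (starRingEnd ℂ) (c n) * (2*Real.pi : ℂ)
          = ((‖c n‖^2 : ℝ) : ℂ) * (2*Real.pi : ℂ) := by
        intro n
        rw [Complex.mul_conj, Complex.sq_norm]
      simp_rw [this]
      rw [tsum_mul_right]
      ring
    · -- finiteness of the sum of lintegrals
      have hμ : volume (Set.Ioc (0:ℝ) (2*Real.pi)) = ENNReal.ofReal (2*Real.pi) := by
        rw [Real.volume_Ioc, sub_zero]
      have hb : ∀ p : ℕ × ℕ, (∫⁻ θ in Set.Ioc (0:ℝ) (2*Real.pi),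
          (‖c p.1 * (starRingEnd ℂ) (c p.2) * Complex.exp (((p.1:ℂ) - p.2) * θ * Complex.I)‖₊
            : ℝ≥0∞))
          = ((‖c p.1‖₊ * ‖c p.2‖₊ : ℝ≥0) : ℝ≥0∞) * ENNReal.ofReal (2*Real.pi) := by
        intro p
        have hpt : ∀ θ : ℝ,
            ‖c p.1 * (starRingEnd ℂ) (c p.2) * Complex.exp (((p.1:ℂ) - p.2) * θ * Complex.I)‖₊
              = ‖c p.1‖₊ * ‖c p.2‖₊ := by
          intro θ
          refine NNReal.coe_injective ?_
          rw [NNReal.coe_mul, coe_nnnorm, coe_nnnorm, coe_nnnorm]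
          exact hnorm3 p θ
        simp_rw [hpt]
        rw [MeasureTheory.setLIntegral_const, hμ]
      simp only [enorm_eq_nnnorm, hb]
      rw [ENNReal.tsum_mul_right]
      refine ENNReal.mul_ne_top ?_ ENNReal.ofReal_ne_top
      rw [ENNReal.tsum_coe_ne_top_iff_summable]
      rw [← NNReal.summable_coe]
      simpa [NNReal.coe_mul, coe_nnnorm] using
        hc.mul_of_nonneg hc (fun x => norm_nonneg _) (fun x => norm_nonneg _)
  -- conclude by taking real parts
  have lhs : (∫ θ in (0:ℝ)..(2*Real.pi), ((‖S θ‖^2 : ℝ) : ℂ))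
      = ((∫ θ in (0:ℝ)..(2*Real.pi), ‖S θ‖^2 : ℝ) : ℂ) := intervalIntegral.integral_ofReal
  rw [lhs] at key
  have hsq : Summable fun n : ℕ => ‖c n‖^2 := by
    have hK : ∀ n, ‖c n‖ ≤ ∑' k, ‖c k‖ := fun n => Summable.le_tsum hc n fun _ _ => norm_nonneg _
    refine Summable.of_nonneg_of_le (fun n => sq_nonneg _) (fun n => ?_) (hc.mul_left (∑' k, ‖c k‖))
    calc ‖c n‖^2 = ‖c n‖ * ‖c n‖ := by ring
      _ ≤ (∑' k, ‖c k‖) * ‖c n‖ := by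
          exact mul_le_mul_of_nonneg_right (hK n) (norm_nonneg _)
  have : ((∫ θ in (0:ℝ)..(2*Real.pi), ‖S θ‖^2 : ℝ) : ℂ)
      = ((2*Real.pi * ∑' n : ℕ, ‖c n‖^2 : ℝ) : ℂ) := by
    rw [key, Complex.ofReal_mul, Complex.ofReal_tsum]
    push_cast
    ring_nf
  exact Complex.ofReal_injective this

lemma sumgeo {C : ℝ} {d : ℕ → ℂ} (hd : ∀ n, ‖d n‖ ≤ C) {r : ℝ} (h0 : 0 ≤ r) (h1 : r < 1) :
    Summable fun n => ‖d n‖ * r ^ n := by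
  refine Summable.of_nonneg_of_le (fun n => mul_nonneg (norm_nonneg _) (pow_nonneg h0 n))
    (fun n => mul_le_mul_of_nonneg_right (hd n) (pow_nonneg h0 n))
    (((summable_geometric_of_lt_one h0 h1)).mul_left C)

lemma exists_coeff {b : ℂ → ℂ} (hb : AnalyticOnNhd ℂ b (ball (0:ℂ) 1)) :
    ∃ β : ℕ → ℂ, (∀ r : ℝ, 0 ≤ r → r < 1 → Summable fun k => ‖β k‖ * r ^ k) ∧
      (∀ z ∈ ball (0:ℂ) 1, HasSum (fun k => β k * z ^ k) (b z)) := by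
  have hq : ∀ r : ℝ≥0, 0 < r → (r : ℝ) < 1 →
      HasFPowerSeriesOnBall b (cauchyPowerSeries b 0 r) 0 r := by
    intro r h0 h1
    refine DifferentiableOn.hasFPowerSeriesOnBall ?_ h0
    intro z hz
    exact (hb z (closedBall_subset_ball h1 hz)).differentiableAt.differentiableWithinAt
  set p := cauchyPowerSeries b 0 ((2⁻¹ : ℝ≥0) : ℝ) with hpdef
  have hp : ∀ r : ℝ≥0, 0 < r → (r : ℝ) < 1 → HasFPowerSeriesOnBall b p 0 r := by
    intro r h0 h1
    have h := hq r h0 h1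
    have h2 := hq 2⁻¹ (by norm_num) (by norm_num)
    rwa [h.hasFPowerSeriesAt.eq_formalMultilinearSeries h2.hasFPowerSeriesAt] at h
  refine ⟨p.coeff, ?_, ?_⟩
  · intro r h0 h1
    obtain ⟨s, hs1, hs2⟩ := exists_between h1
    have h0s : 0 < s := lt_of_le_of_lt h0 hs1
    have hle : (s.toNNReal : ℝ≥0∞) ≤ p.radius :=
      (hp s.toNNReal (by simp [h0s]) (by rw [Real.coe_toNNReal _ h0s.le]; exact hs2)).r_le
    have hlt : (r.toNNReal : ℝ≥0∞) < p.radius := by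
      refine lt_of_lt_of_le ?_ hle
      rw [ENNReal.coe_lt_coe]
      exact_mod_cast (Real.toNNReal_lt_toNNReal_iff h0s).2 hs1
    have hs := p.summable_norm_mul_pow hlt
    rw [Real.coe_toNNReal _ h0] at hs
    refine Summable.of_nonneg_of_le (fun n => mul_nonneg (norm_nonneg _) (pow_nonneg h0 n))
      (fun n => mul_le_mul_of_nonneg_right ?_ (pow_nonneg h0 n)) hs
    calc ‖p.coeff n‖ = ‖p n fun _ => 1‖ := rfl
      _ ≤ ‖p n‖ * ∏ _i : Fin n, ‖(1:ℂ)‖ := (p n).le_opNorm _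
      _ = ‖p n‖ := by simp
  · intro z hz
    rw [mem_ball_zero_iff] at hz
    obtain ⟨s, hs1, hs2⟩ := exists_between hz
    have h0s : 0 < s := lt_of_le_of_lt (norm_nonneg z) hs1
    have h := (hp s.toNNReal (by simp [h0s]) (by rw [Real.coe_toNNReal _ h0s.le]; exact hs2)).hasSum
      (y := z) ?_
    · rw [zero_add] at h
      refine h.congr_fun fun n => ?_
      rw [FormalMultilinearSeries.apply_eq_pow_smul_coeff, smul_eq_mul, mul_comm]
    · rw [Metric.emetric_ball_nnreal, mem_ball_zero_iff, Real.coe_toNNReal _ h0s.le]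
      exact hs1

lemma sqsum {c : ℕ → ℂ} (hc : Summable fun n => ‖c n‖) : Summable fun n => ‖c n‖^2 := by
  have hK : ∀ n, ‖c n‖ ≤ ∑' k, ‖c k‖ := fun n => Summable.le_tsum hc n fun _ _ => norm_nonneg _
  refine Summable.of_nonneg_of_le (fun n => sq_nonneg _) (fun n => ?_) (hc.mul_left (∑' k, ‖c k‖))
  calc ‖c n‖^2 = ‖c n‖ * ‖c n‖ := by ring
    _ ≤ (∑' k, ‖c k‖) * ‖c n‖ := mul_le_mul_of_nonneg_right (hK n) (norm_nonneg _)

lemma norm_term (c : ℂ) (n : ℕ) (θ : ℝ) : ‖c * Complex.exp (n * θ * Complex.I)‖ = ‖c‖ := by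
  rw [norm_mul, norm_exp_real_mul_I θ (n:ℂ) (by simp), mul_one]

lemma cont_S {c : ℕ → ℂ} (hc : Summable fun n => ‖c n‖) :
    Continuous (fun θ : ℝ => ∑' n : ℕ, c n * Complex.exp (n * θ * Complex.I)) := by
  refine continuous_tsum (fun n => ?_) hc (fun n θ => le_of_eq (norm_term _ _ _))
  exact continuous_const.mul (Complex.continuous_exp.comp (by fun_prop))

lemma h2_sq_summable (g : H2) : Summable fun n => ‖(g : ∀ _ : ℕ, ℂ) n‖ ^ 2 := by
  have := (lp.memℓp g).summable (by norm_num : 0 < (2:ℝ≥0∞).toReal)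
  refine this.congr fun n => ?_
  rw [show ((2:ℝ≥0∞)).toReal = ((2:ℕ):ℝ) by simp, Real.rpow_natCast]

lemma h2_coeff_le (g : H2) (n : ℕ) :
    ‖(g : ∀ _ : ℕ, ℂ) n‖ ≤ Real.sqrt (∑' k, ‖(g : ∀ _ : ℕ, ℂ) k‖ ^ 2) := by
  rw [show ‖(g : ∀ _ : ℕ, ℂ) n‖ = Real.sqrt (‖(g : ∀ _ : ℕ, ℂ) n‖^2) by
    rw [Real.sqrt_sq (norm_nonneg _)]]
  exact Real.sqrt_le_sqrt (Summable.le_tsum (h2_sq_summable g) n fun _ _ => sq_nonneg _)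

lemma mult {b : ℂ → ℂ} (hb : AnalyticOnNhd ℂ b (ball (0:ℂ) 1)) {M : ℝ}
    (hbM : ∀ z ∈ ball (0:ℂ) 1, ‖b z‖ ≤ M) (g : H2) :
    ∃ u : H2, ∀ z ∈ ball (0:ℂ) 1, hardyEval u z = b z * hardyEval g z := by
  obtain ⟨β, hβsum, hβeval⟩ := exists_coeff hb
  set G : ℕ → ℂ := (g : ∀ _ : ℕ, ℂ) with hG
  set B := ∑' k, ‖G k‖^2 with hB
  have hB0 : 0 ≤ B := tsum_nonneg fun k => sq_nonneg _
  have hGsum : Summable fun n => ‖G n‖^2 := h2_sq_summable g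
  have hGle : ∀ n, ‖G n‖ ≤ Real.sqrt B := h2_coeff_le g
  have hM0 : 0 ≤ M := le_trans (norm_nonneg _) (hbM 0 (mem_ball_self one_pos))
  set u0 : ℕ → ℂ := fun n => ∑ kl ∈ Finset.HasAntidiagonal.antidiagonal n, β kl.1 * G kl.2 with hu0
  have hβz : ∀ z : ℂ, ‖z‖ < 1 → Summable fun k => ‖β k * z ^ k‖ := by
    intro z hz
    have := hβsum ‖z‖ (norm_nonneg z) hz
    simpa [norm_mul, norm_pow] using this
  have hGz : ∀ z : ℂ, ‖z‖ < 1 → Summable fun k => ‖G k * z ^ k‖ := by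
    intro z hz
    have := sumgeo hGle (norm_nonneg z) hz
    simpa [norm_mul, norm_pow] using this
  have hinner : ∀ (z : ℂ) (n : ℕ),
      ∑ kl ∈ Finset.HasAntidiagonal.antidiagonal n, (β kl.1 * z ^ kl.1) * (G kl.2 * z ^ kl.2)
        = u0 n * z ^ n := by
    intro z n
    rw [hu0, Finset.sum_mul]
    refine Finset.sum_congr rfl fun kl hkl => ?_
    rw [Finset.HasAntidiagonal.mem_antidiagonal] at hkl
    rw [← hkl, pow_add]; ring
  have hkey : ∀ z : ℂ, ‖z‖ < 1 → (∑' n, u0 n * z ^ n) = b z * (∑' n, G n * z ^ n) := by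
    intro z hz
    have hbz : b z = ∑' k, β k * z ^ k := (hβeval z (mem_ball_zero_iff.2 hz)).tsum_eq.symm
    rw [hbz, tsum_mul_tsum_eq_tsum_sum_antidiagonal_of_summable_norm (hβz z hz) (hGz z hz)]
    exact (tsum_congr fun n => hinner z n).symm
  have hu0sum : ∀ z : ℂ, ‖z‖ < 1 → Summable fun n => ‖u0 n * z ^ n‖ := by
    intro z hz
    have := summable_norm_sum_mul_antidiagonal_of_summable_norm (hβz z hz) (hGz z hz)
    exact this.congr fun n => by rw [hinner z n]
  -- main coefficient bound
  have hbound : ∀ N : ℕ, ∑ n ∈ Finset.range N, ‖u0 n‖^2 ≤ M^2 * B := by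
    intro N
    set φ : ℝ → ℝ := fun r => ∑ n ∈ Finset.range N, ‖u0 n‖^2 * (r^n)^2 with hφ
    have hφcont : Continuous φ := by
      refine continuous_finset_sum _ fun n _ => ?_
      fun_prop
    have hr : ∀ r ∈ Set.Ioo (1/2 : ℝ) 1, φ r ≤ M^2 * B := by
      rintro r ⟨hr0, hr1⟩
      have hr0' : (0:ℝ) ≤ r := by linarith
      have hrn : ‖(r:ℂ)‖ < 1 := by rwa [Complex.norm_real, Real.norm_of_nonneg hr0']
      set cu : ℕ → ℂ := fun n => u0 n * (r:ℂ)^n with hcu_def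
      set cg : ℕ → ℂ := fun n => G n * (r:ℂ)^n with hcg_def
      have hcu : Summable fun n => ‖cu n‖ := hu0sum (r:ℂ) hrn
      have hcg : Summable fun n => ‖cg n‖ := hGz (r:ℂ) hrn
      have hzform : ∀ θ : ℝ, ∀ c : ℕ → ℂ, ∀ n : ℕ,
          (c n * (r:ℂ)^n) * Complex.exp (n * θ * Complex.I)
            = c n * ((r:ℂ) * Complex.exp (θ * Complex.I))^n := by
        intro θ c n
        rw [mul_pow, show ((n:ℂ) * θ * Complex.I) = n * (θ * Complex.I) by ring,
          Complex.exp_nat_mul]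
        ring
      have hznorm : ∀ θ : ℝ, ‖(r:ℂ) * Complex.exp (θ * Complex.I)‖ < 1 := by
        intro θ
        rw [norm_mul, Complex.norm_exp_ofReal_mul_I,
          mul_one, Complex.norm_real, Real.norm_of_nonneg hr0']
        exact hr1
      -- pointwise identification and bound
      have hpoint : ∀ θ : ℝ, ‖∑' n : ℕ, cu n * Complex.exp (n * θ * Complex.I)‖^2
          ≤ M^2 * ‖∑' n : ℕ, cg n * Complex.exp (n * θ * Complex.I)‖^2 := by
        intro θ
        set z := (r:ℂ) * Complex.exp (θ * Complex.I) with hzdef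
        have e1 : (∑' n : ℕ, cu n * Complex.exp (n * θ * Complex.I)) = ∑' n, u0 n * z ^ n :=
          tsum_congr fun n => hzform θ u0 n
        have e2 : (∑' n : ℕ, cg n * Complex.exp (n * θ * Complex.I)) = ∑' n, G n * z ^ n :=
          tsum_congr fun n => hzform θ G n
        rw [e1, e2, hkey z (hznorm θ)]
        rw [norm_mul, mul_pow]
        have h1 : ‖b z‖^2 ≤ M^2 := by
          have := hbM z (mem_ball_zero_iff.2 (hznorm θ))
          exact pow_le_pow_left₀ (norm_nonneg _) this 2
        exact mul_le_mul_of_nonneg_right h1 (sq_nonneg _)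
      -- integrate
      have hint1 : IntervalIntegrable
          (fun θ : ℝ => ‖∑' n : ℕ, cu n * Complex.exp (n * θ * Complex.I)‖^2)
          volume 0 (2*Real.pi) := (((cont_S hcu).norm.pow 2)).intervalIntegrable _ _
      have hint2 : IntervalIntegrable
          (fun θ : ℝ => M^2 * ‖∑' n : ℕ, cg n * Complex.exp (n * θ * Complex.I)‖^2)
          volume 0 (2*Real.pi) :=
        (continuous_const.mul ((cont_S hcg).norm.pow 2)).intervalIntegrable _ _
      have hmono := intervalIntegral.integral_mono_on (by positivity : (0:ℝ) ≤ 2*Real.pi)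
        hint1 hint2 (fun θ _ => hpoint θ)
      rw [parseval hcu, intervalIntegral.integral_const_mul, parseval hcg] at hmono
      -- conclude
      have h2π : (0:ℝ) < 2*Real.pi := by positivity
      have hsum_le : (∑' n, ‖cu n‖^2) ≤ M^2 * ∑' n, ‖cg n‖^2 := by
        have := (mul_le_mul_iff_of_pos_left h2π).1 (by linarith [hmono] : 2*Real.pi * (∑' n, ‖cu n‖^2)
          ≤ 2*Real.pi * (M^2 * ∑' n, ‖cg n‖^2))
        exact this
      have hcg_le : (∑' n, ‖cg n‖^2) ≤ B := by
        rw [hB]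
        refine Summable.tsum_le_tsum (fun n => ?_) (sqsum hcg) hGsum
        rw [hcg_def]
        simp only []
        rw [norm_mul, mul_pow, norm_pow, Complex.norm_real, Real.norm_of_nonneg hr0']
        have : (r^n)^2 ≤ 1 := by
          refine pow_le_one₀ (by positivity) ?_
          exact pow_le_one₀ hr0' hr1.le
        nlinarith [sq_nonneg ‖G n‖, norm_nonneg (G n)]
      have hφr : φ r ≤ ∑' n, ‖cu n‖^2 := by
        rw [hφ]
        have : ∀ n, ‖u0 n‖^2 * (r^n)^2 = ‖cu n‖^2 := by
          intro n
          rw [hcu_def]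
          simp only []
          rw [norm_mul, mul_pow, norm_pow, Complex.norm_real, Real.norm_of_nonneg hr0']
        simp_rw [this]
        exact Summable.sum_le_tsum _ (fun n _ => sq_nonneg _) (sqsum hcu)
      calc φ r ≤ ∑' n, ‖cu n‖^2 := hφr
        _ ≤ M^2 * ∑' n, ‖cg n‖^2 := hsum_le
        _ ≤ M^2 * B := mul_le_mul_of_nonneg_left hcg_le (by positivity)
    -- take the limit r → 1⁻
    have hne : (nhdsWithin (1:ℝ) (Set.Ioo (1/2:ℝ) 1)).NeBot := by
      rw [← mem_closure_iff_nhdsWithin_neBot, closure_Ioo (by norm_num : (1/2:ℝ) ≠ 1)]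
      exact Set.right_mem_Icc.2 (by norm_num)
    have hlim : Filter.Tendsto φ (nhdsWithin 1 (Set.Ioo (1/2:ℝ) 1)) (nhds (φ 1)) :=
      (hφcont.tendsto 1).mono_left nhdsWithin_le_nhds
    have hφ1 : φ 1 ≤ M^2 * B :=
      le_of_tendsto hlim (Filter.eventually_of_mem self_mem_nhdsWithin hr)
    rw [hφ] at hφ1
    simpa using hφ1
  -- membership in ℓ²
  have hmem : Memℓp u0 2 := by
    refine memℓp_gen ?_
    have hexp : ∀ x : ℝ, x ^ ((2:ℝ≥0∞)).toReal = x ^ (2:ℕ) := by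
      intro x
      rw [show ((2:ℝ≥0∞)).toReal = ((2:ℕ):ℝ) by simp, Real.rpow_natCast]
    simp_rw [hexp]
    exact summable_of_sum_range_le (fun n => sq_nonneg _) hbound
  refine ⟨⟨u0, hmem⟩, fun z hz => ?_⟩
  rw [mem_ball_zero_iff] at hz
  exact hkey z hz

lemma deriv_eval (g h : H2)
    (hgh : ∀ n : ℕ, (g : ∀ _ : ℕ, ℂ) (n+1) = (h : ∀ _ : ℕ, ℂ) n / ((n:ℂ)+1))
    {z : ℂ} (hz : z ∈ ball (0:ℂ) 1) :
    deriv (hardyEval g) z = hardyEval h z := by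
  rw [mem_ball_zero_iff] at hz
  obtain ⟨r, hr1, hr2⟩ := exists_between hz
  have hr0 : 0 < r := lt_of_le_of_lt (norm_nonneg z) hr1
  set G := (g : ∀ _ : ℕ, ℂ) with hGdef
  set C := Real.sqrt (∑' k, ‖G k‖^2) with hC
  have hGle : ∀ n, ‖G n‖ ≤ C := h2_coeff_le g
  have hC0 : 0 ≤ C := Real.sqrt_nonneg _
  set u : ℕ → ℝ := fun n => C * (n * r^(n-1)) with hu_def
  have hu : Summable u := by
    have h1 : Summable (fun n : ℕ => ((n:ℝ)+1) * r^n) := by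
      have h2 : Summable (fun n : ℕ => (n:ℝ)^1 * r^n) := by
        refine summable_pow_mul_geometric_of_norm_lt_one 1 ?_
        rw [Real.norm_of_nonneg hr0.le]; exact hr2
      have h3 : Summable (fun n : ℕ => r^n) := summable_geometric_of_lt_one hr0.le hr2
      simpa [add_mul, pow_one] using h2.add h3
    have h4 : Summable (fun n : ℕ => (n:ℝ) * r^(n-1)) := by
      refine (summable_nat_add_iff 1).1 ?_
      refine h1.congr fun n => ?_
      simp [Nat.add_sub_cancel]
    exact h4.mul_left C
  have hderiv : ∀ (n : ℕ) (y : ℂ), y ∈ ball (0:ℂ) r →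
      HasDerivAt (fun w : ℂ => G n * w^n) (G n * (n * y^(n-1))) y := by
    intro n y _
    exact (hasDerivAt_pow n y).const_mul (G n)
  have hbound : ∀ (n : ℕ) (y : ℂ), y ∈ ball (0:ℂ) r → ‖G n * (n * y^(n-1))‖ ≤ u n := by
    intro n y hy
    rw [mem_ball_zero_iff] at hy
    rw [norm_mul, norm_mul, norm_pow, Complex.norm_natCast, hu_def]
    have hyr : ‖y‖^(n-1) ≤ r^(n-1) := pow_le_pow_left₀ (norm_nonneg y) hy.le _
    calc ‖G n‖ * ((n:ℝ) * ‖y‖^(n-1)) ≤ C * ((n:ℝ) * r^(n-1)) := by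
          gcongr
          exact hGle n
      _ = C * ((n:ℝ) * r^(n-1)) := rfl
  have hsum0 : Summable fun n : ℕ => G n * (0:ℂ)^n := by
    refine summable_of_ne_finset_zero (s := {0}) fun n hn => ?_
    simp only [Finset.mem_singleton] at hn
    rw [zero_pow hn, mul_zero]
  have hD := hasDerivAt_tsum_of_isPreconnected hu isOpen_ball
    (convex_ball (0:ℂ) r).isPreconnected hderiv hbound
    (mem_ball_self hr0) hsum0 (mem_ball_zero_iff.2 hr1)
  have hEq : hardyEval g = fun w => ∑' n, G n * w^n := rfl
  rw [hEq, hD.deriv]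
  have hsummable : Summable (fun n => G n * ((n:ℂ) * z^(n-1))) := by
    refine Summable.of_norm ?_
    refine Summable.of_nonneg_of_le (fun n => norm_nonneg _)
      (fun n => hbound n z (mem_ball_zero_iff.2 hr1)) hu
  rw [Summable.tsum_eq_zero_add hsummable]
  simp only [Nat.cast_zero, zero_mul, mul_zero, zero_add]
  refine tsum_congr fun n => ?_
  rw [hgh n]
  have hne : ((n:ℂ)+1) ≠ 0 := Nat.cast_add_one_ne_zero n
  rw [Nat.add_sub_cancel]
  push_cast
  field_simp

lemma hexp2 : ∀ x : ℝ, x ^ ((2:ℝ≥0∞)).toReal = x ^ (2:ℕ) := by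
  intro x
  rw [show ((2:ℝ≥0∞)).toReal = ((2:ℕ):ℝ) by simp, Real.rpow_natCast]

lemma memℓp_two_of {f : ℕ → ℂ} (h : Summable fun n => ‖f n‖^2) : Memℓp f 2 := by
  refine memℓp_gen ?_
  simp_rw [hexp2]
  exact h

lemma h2_sq_summable' (g : H2) : Summable fun n => ‖(g : ∀ _ : ℕ, ℂ) n‖ ^ 2 := by
  have := (lp.memℓp g).summable (by norm_num : 0 < (2:ℝ≥0∞).toReal)
  exact this.congr fun n => hexp2 _

lemma h2_norm_sq (f : H2) : ‖f‖^2 = ∑' n, ‖(f : ∀ _ : ℕ, ℂ) n‖^2 := by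
  have := lp.norm_rpow_eq_tsum (p := 2) (by norm_num) f
  rw [show ((2:ℝ≥0∞)).toReal = ((2:ℕ):ℝ) by simp] at this
  simpa [Real.rpow_natCast] using this

-- the J sequence
noncomputable def Jseq (t : ℕ → ℂ) : ℕ → ℂ := fun n =>
  match n with
  | 0 => 0
  | Nat.succ m => t m / ((m:ℂ)+1)

lemma Jseq_zero (t : ℕ → ℂ) : Jseq t 0 = 0 := rfl

lemma Jseq_succ (t : ℕ → ℂ) (m : ℕ) : Jseq t (m+1) = t m / ((m:ℂ)+1) := rfl

lemma Jseq_norm_le (t : ℕ → ℂ) (m : ℕ) : ‖Jseq t (m+1)‖ ≤ ‖t m‖ := by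
  rw [Jseq_succ, norm_div]
  have h1 : (1:ℝ) ≤ ‖((m:ℂ)+1)‖ := by
    rw [show ((m:ℂ)+1) = ((m+1 : ℕ) : ℂ) by push_cast; ring, Complex.norm_natCast]
    exact_mod_cast Nat.succ_le_succ (Nat.zero_le m)
  calc ‖t m‖ / ‖(m:ℂ)+1‖ ≤ ‖t m‖ / 1 := by
        gcongr
    _ = ‖t m‖ := div_one _
  
lemma Jseq_sq_summable {t : ℕ → ℂ} (ht : Summable fun n => ‖t n‖^2) :
    Summable fun n => ‖Jseq t n‖^2 := by
  refine (summable_nat_add_iff 1).1 ?_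
  refine Summable.of_nonneg_of_le (fun n => sq_nonneg _) (fun n => ?_) ht
  exact pow_le_pow_left₀ (norm_nonneg _) (Jseq_norm_le t n) 2

lemma Jmem (t : H2) : Memℓp (Jseq (t : ∀ _ : ℕ, ℂ)) 2 :=
  memℓp_two_of (Jseq_sq_summable (h2_sq_summable' t))

noncomputable def Jfun (t : H2) : H2 := ⟨Jseq (t : ∀ _ : ℕ, ℂ), Jmem t⟩

lemma Jfun_apply (t : H2) (n : ℕ) : (Jfun t : ∀ _ : ℕ, ℂ) n = Jseq (t : ∀ _ : ℕ, ℂ) n := rfl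

lemma Jfun_norm_le (t : H2) : ‖Jfun t‖ ≤ ‖t‖ := by
  have h1 : ‖Jfun t‖^2 ≤ ‖t‖^2 := by
    rw [h2_norm_sq, h2_norm_sq]
    have hsum := Jseq_sq_summable (h2_sq_summable' t)
    simp only [Jfun_apply]
    rw [Summable.tsum_eq_zero_add hsum]
    simp only [Jseq_zero, norm_zero]
    rw [show (0:ℝ)^2 = 0 by norm_num, zero_add]
    refine Summable.tsum_le_tsum (fun n => ?_) ((summable_nat_add_iff 1).2 hsum) (h2_sq_summable' t)
    exact pow_le_pow_left₀ (norm_nonneg _) (Jseq_norm_le _ n) 2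
  exact (pow_le_pow_iff_left₀ (norm_nonneg _) (norm_nonneg _) (by norm_num)).1 h1

lemma Jfun_sub (x y : H2) : Jfun x - Jfun y = Jfun (x - y) := by
  ext n
  rw [lp.coeFn_sub, Pi.sub_apply]
  cases n with
  | zero => simp [Jfun_apply, Jseq_zero]; rfl
  | succ m =>
    simp only [Jfun_apply, Jseq_succ, lp.coeFn_sub, Pi.sub_apply]
    rw [div_sub_div_same]

lemma Jfun_continuous : Continuous Jfun := by
  refine LipschitzWith.continuous (K := 1) (LipschitzWith.of_dist_le_mul fun x y => ?_)
  rw [dist_eq_norm, dist_eq_norm, Jfun_sub, NNReal.coe_one, one_mul]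
  exact Jfun_norm_le (x - y)

-- every element with zero first coefficient is in the closure of the range of Jfun
lemma mem_closure_range_Jfun (x : H2) (hx0 : (x : ∀ _ : ℕ, ℂ) 0 = 0) :
    x ∈ closure (Set.range Jfun) := by
  have hXsq := h2_sq_summable' x
  -- truncated preimages
  have hmem : ∀ N : ℕ, Memℓp (fun n => if n < N then ((n:ℂ)+1) * (x : ∀ _ : ℕ, ℂ) (n+1) else 0) 2 := by
    intro N
    refine memℓp_two_of (summable_of_ne_finset_zero (s := Finset.range N) fun n hn => ?_)
    simp only [Finset.mem_range] at hn
    simp [if_neg hn]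
  set tN : ℕ → H2 := fun N => ⟨_, hmem N⟩ with htN
  have happly : ∀ N n, ((tN N : ∀ _ : ℕ, ℂ)) n = if n < N then ((n:ℂ)+1) * (x : ∀ _ : ℕ, ℂ) (n+1) else 0 :=
    fun N n => rfl
  -- the difference
  have hdiff : ∀ N k, ((x - Jfun (tN N) : H2) : ∀ _ : ℕ, ℂ) k
      = if k < N + 1 then 0 else (x : ∀ _ : ℕ, ℂ) k := by
    intro N k
    rw [lp.coeFn_sub, Pi.sub_apply]
    cases k with
    | zero =>
      simp [Jfun_apply, Jseq_zero, hx0, Nat.succ_pos]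
    | succ m =>
      rw [Jfun_apply, Jseq_succ, happly]
      by_cases hm : m < N
      · rw [if_pos hm, if_pos (Nat.succ_lt_succ hm)]
        have hne : ((m:ℂ)+1) ≠ 0 := Nat.cast_add_one_ne_zero m
        field_simp
        simp
      · rw [if_neg hm, if_neg (fun h => hm (Nat.lt_of_succ_lt_succ h))]
        simp
  have hnormsq : ∀ N, ‖x - Jfun (tN N)‖^2 = ∑' k, ‖(x : ∀ _ : ℕ, ℂ) (k + (N+1))‖^2 := by
    intro N
    rw [h2_norm_sq]
    have hsum : Summable fun k => ‖((x - Jfun (tN N) : H2) : ∀ _ : ℕ, ℂ) k‖^2 :=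
      h2_sq_summable' _
    rw [← Summable.sum_add_tsum_nat_add (N+1) hsum]
    have hzero : ∀ i ∈ Finset.range (N+1), ‖((x - Jfun (tN N) : H2) : ∀ _ : ℕ, ℂ) i‖^2 = 0 := by
      intro i hi
      rw [Finset.mem_range] at hi
      rw [hdiff N i, if_pos hi, norm_zero]
      norm_num
    rw [Finset.sum_congr rfl hzero, Finset.sum_const_zero, zero_add]
    refine tsum_congr fun k => ?_
    rw [hdiff N (k + (N+1)), if_neg (by omega)]
  -- tendsto
  have htend0 : Filter.Tendsto (fun N => ‖x - Jfun (tN N)‖^2) Filter.atTop (nhds 0) := by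
    have h1 : Filter.Tendsto (fun i => ∑' k, ‖(x : ∀ _ : ℕ, ℂ) (k + i)‖^2) Filter.atTop (nhds 0) :=
      tendsto_sum_nat_add (f := fun j => ‖(x : ∀ _ : ℕ, ℂ) j‖^2)
    have h2 := h1.comp (Filter.tendsto_add_atTop_nat 1)
    refine h2.congr fun N => ?_
    rw [hnormsq N]
    rfl
  have htend : Filter.Tendsto (fun N => Jfun (tN N)) Filter.atTop (nhds x) := by
    rw [tendsto_iff_norm_sub_tendsto_zero]
    have : Filter.Tendsto (fun N => ‖x - Jfun (tN N)‖) Filter.atTop (nhds 0) := by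
      have hs := (Real.continuous_sqrt.tendsto' 0 0 Real.sqrt_zero).comp htend0
      refine hs.congr fun N => ?_
      exact Real.sqrt_sq (norm_nonneg _)
    refine this.congr fun N => ?_
    rw [← norm_neg]
    congr 1
    abel
  exact mem_closure_of_tendsto htend (Filter.Eventually.of_forall fun N => ⟨tN N, rfl⟩)

end LiouvilleAux

open LiouvilleAux in
/-- If `f = b/a` is in the Smirnov class `N⁺` (`a, b ∈ H^∞`, `a` outer), then the
Liouville operator `A_f g = f·g′` with domain `{g ∈ H² : f·g′ ∈ H²}` is densely
defined; in fact its domain contains the dense subspace `ℂ + J(aH²)`. -/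
theorem liouville_smirnov_densely_defined (a b f : ℂ → ℂ)
    (ha_an : AnalyticOnNhd ℂ a (ball (0 : ℂ) 1))
    (hb_an : AnalyticOnNhd ℂ b (ball (0 : ℂ) 1))
    (ha_bdd : ∃ M : ℝ, ∀ z ∈ ball (0 : ℂ) 1, ‖a z‖ ≤ M)
    (hb_bdd : ∃ M : ℝ, ∀ z ∈ ball (0 : ℂ) 1, ‖b z‖ ≤ M)
    (ha_outer : Dense {g : H2 | ∃ h : H2, ∀ z ∈ ball (0 : ℂ) 1,
      hardyEval g z = a z * hardyEval h z})
    (ha_ne : ∀ z ∈ ball (0 : ℂ) 1, a z ≠ 0)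
    (hf : ∀ z ∈ ball (0 : ℂ) 1, f z = b z / a z) :
    ({g : H2 | ∃ c : ℂ, ∃ h : H2,
        (∃ h' : H2, ∀ z ∈ ball (0 : ℂ) 1, hardyEval h z = a z * hardyEval h' z) ∧
        g 0 = c ∧ ∀ n : ℕ, g (n + 1) = h n / ((n : ℂ) + 1)} ⊆
      {g : H2 | ∃ u : H2, ∀ z ∈ ball (0 : ℂ) 1,
        hardyEval u z = f z * deriv (hardyEval g) z}) ∧
    Dense {g : H2 | ∃ u : H2, ∀ z ∈ ball (0 : ℂ) 1,
        hardyEval u z = f z * deriv (hardyEval g) z} := by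
  classical
  obtain ⟨Mb, hMb⟩ := hb_bdd
  have hsub : {g : H2 | ∃ c : ℂ, ∃ h : H2,
        (∃ h' : H2, ∀ z ∈ ball (0 : ℂ) 1, hardyEval h z = a z * hardyEval h' z) ∧
        g 0 = c ∧ ∀ n : ℕ, g (n + 1) = h n / ((n : ℂ) + 1)} ⊆
      {g : H2 | ∃ u : H2, ∀ z ∈ ball (0 : ℂ) 1,
        hardyEval u z = f z * deriv (hardyEval g) z} := by
    rintro g ⟨c, h, ⟨h', hh'⟩, hg0, hgn⟩
    obtain ⟨u, hu⟩ := mult hb_an hMb h'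
    refine ⟨u, fun z hz => ?_⟩
    rw [hu z hz, deriv_eval g h hgn hz, hh' z hz, hf z hz]
    have ha := ha_ne z hz
    field_simp
  refine ⟨hsub, Dense.mono hsub ?_⟩
  -- density of ℂ + J(aH²)
  intro g
  set T := {g : H2 | ∃ h : H2, ∀ z ∈ ball (0 : ℂ) 1,
      hardyEval g z = a z * hardyEval h z} with hT
  set c0 : ℂ := (g : ∀ _ : ℕ, ℂ) 0 with hc0
  set x : H2 := g - lp.single 2 0 c0 with hx
  have hx0 : (x : ∀ _ : ℕ, ℂ) 0 = 0 := by
    rw [hx, lp.coeFn_sub, Pi.sub_apply, lp.single_apply_self, sub_self]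
  have hxcl : x ∈ closure (Set.range Jfun) := mem_closure_range_Jfun x hx0
  have hTuniv : closure T = Set.univ := ha_outer.closure_eq
  have h1 : Set.range Jfun ⊆ closure (Jfun '' T) := by
    rintro y ⟨t, rfl⟩
    refine image_closure_subset_closure_image Jfun_continuous ⟨t, ?_, rfl⟩
    rw [hTuniv]; trivial
  have h2 : x ∈ closure (Jfun '' T) :=
    closure_minimal h1 isClosed_closure hxcl
  have hmap : Set.MapsTo (fun y => lp.single 2 0 c0 + y) (Jfun '' T)
      {g : H2 | ∃ c : ℂ, ∃ h : H2,
        (∃ h' : H2, ∀ z ∈ ball (0 : ℂ) 1, hardyEval h z = a z * hardyEval h' z) ∧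
        g 0 = c ∧ ∀ n : ℕ, g (n + 1) = h n / ((n : ℂ) + 1)} := by
    rintro y ⟨t, htT, rfl⟩
    obtain ⟨h', hh'⟩ := htT
    refine ⟨c0, t, ⟨h', hh'⟩, ?_, ?_⟩
    · rw [lp.coeFn_add, Pi.add_apply, lp.single_apply_self, Jfun_apply, Jseq_zero, add_zero]
    · intro n
      rw [lp.coeFn_add, Pi.add_apply, lp.single_apply_ne (E := fun _ : ℕ => ℂ) 2 0 c0 (show (n+1) ≠ 0 from Nat.succ_ne_zero n),
        Jfun_apply, Jseq_succ, zero_add]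
  have hmem := map_mem_closure (continuous_const.add continuous_id) h2 hmap
  have hgx : lp.single 2 0 c0 + x = g := by
    rw [hx]; abel
  simpa [hgx] using hmem
end

section
/- If the Liouville operator A_f (with A_f g = f·g′, domain { g ∈ H² : f·g′ ∈ H² }) is densely defined on H², then the symbol f is analytic on the unit disc. -/
open Metric ComplexConjugate

/-!
For `z` in the disc, `g ↦ g′(z)` is the inner product with the nonzero vector
`(conj (n z^(n-1)))ₙ ∈ H²`, so a dense set cannot lie in its kernel: some `g` in the
domain of `A_f` has `g′(z) ≠ 0`, and near `z` the symbol `f` is the quotient `A_f g / g′`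
of two analytic functions.
-/

open Filter Topology FormalMultilinearSeries

lemma summable_natCast_mul_pow_pred {r : ℝ} (hr₀ : 0 ≤ r) (hr₁ : r < 1) :
    Summable fun n : ℕ => (n : ℝ) * r ^ (n - 1) := by
  rw [← summable_nat_add_iff 1]
  have hlin : Summable fun n : ℕ => (n : ℝ) * r ^ n := by
    simpa using summable_pow_mul_geometric_of_norm_lt_one 1
      (by rwa [Real.norm_of_nonneg hr₀])
  simpa [add_mul] using hlin.add (summable_geometric_of_lt_one hr₀ hr₁)

section hardyEval

variable (h : H2)

lemma hasFPowerSeriesOnBall_hardyEval :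
    HasFPowerSeriesOnBall (hardyEval h) (ofScalars ℂ fun n => h n) 0 1 := by
  have hrad : 1 ≤ (ofScalars ℂ fun n => h n).radius := by
    simpa using (ofScalars ℂ fun n => h n).le_radius_of_bound ‖h‖ (r := 1) fun n => by
      simpa [ofScalars_norm] using lp.norm_apply_le_norm two_ne_zero h n
  have hsum : hardyEval h = (ofScalars ℂ fun n => h n).sum := by
    funext z
    rw [hardyEval, ← ofScalarsSum, ofScalars_sum_eq]
    simp [smul_eq_mul]
  rw [hsum]
  exact ((ofScalars ℂ fun n => h n).hasFPowerSeriesOnBall (one_pos.trans_le hrad)).mono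
    one_pos hrad

lemma analyticOnNhd_hardyEval : AnalyticOnNhd ℂ (hardyEval h) (ball 0 1) := by
  simpa [← ENNReal.coe_one, eball_coe] using (hasFPowerSeriesOnBall_hardyEval h).analyticOnNhd

lemma hasDerivAt_hardyEval {z : ℂ} (hz : ‖z‖ < 1) :
    HasDerivAt (hardyEval h) (∑' n : ℕ, h n * ((n : ℂ) * z ^ (n - 1))) z := by
  obtain ⟨r, hzr, hr₁⟩ := exists_between hz
  have hr₀ : 0 < r := (norm_nonneg z).trans_lt hzr
  refine hasDerivAt_tsum_of_isPreconnected
    ((summable_natCast_mul_pow_pred hr₀.le hr₁).mul_left ‖h‖) isOpen_ball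
    (convex_ball 0 r).isPreconnected (fun n y _ => (hasDerivAt_pow n y).const_mul (h n))
    (fun n y hy => ?_) (mem_ball_self hr₀) ?_ (mem_ball_zero_iff.mpr hzr)
  · rw [mem_ball_zero_iff] at hy
    calc ‖h n * ((n : ℂ) * y ^ (n - 1))‖ = ‖h n‖ * ((n : ℝ) * ‖y‖ ^ (n - 1)) := by simp
      _ ≤ ‖h‖ * ((n : ℝ) * r ^ (n - 1)) := by
        gcongr
        exact lp.norm_apply_le_norm two_ne_zero h n
  · exact summable_of_ne_finset_zero (s := {0}) fun n hn => by
      simp [zero_pow (Finset.notMem_singleton.mp hn)]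

end hardyEval

lemma memℓp_conj_natCast_mul_pow_pred {z : ℂ} (hz : ‖z‖ < 1) :
    Memℓp (fun n : ℕ => conj ((n : ℂ) * z ^ (n - 1))) 2 := by
  refine Memℓp.of_exponent_ge (memℓp_gen ?_) one_le_two
  simpa using summable_natCast_mul_pow_pred (norm_nonneg z) hz

noncomputable def derivKernel {z : ℂ} (hz : ‖z‖ < 1) : H2 :=
  ⟨_, memℓp_conj_natCast_mul_pow_pred hz⟩

lemma deriv_hardyEval_eq_inner (g : H2) {z : ℂ} (hz : ‖z‖ < 1) :
    deriv (hardyEval g) z = inner ℂ (derivKernel hz) g := by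
  rw [(hasDerivAt_hardyEval g hz).deriv, lp.inner_eq_tsum]
  refine tsum_congr fun n => ?_
  simp [derivKernel, mul_comm]

lemma derivKernel_ne_zero {z : ℂ} (hz : ‖z‖ < 1) : derivKernel hz ≠ 0 := fun h0 => by
  simpa [derivKernel] using congrArg (fun w : H2 => w 1) h0

lemma Dense.exists_deriv_hardyEval_ne_zero {S : Set H2} (hS : Dense S) {z : ℂ} (hz : ‖z‖ < 1) :
    ∃ g ∈ S, deriv (hardyEval g) z ≠ 0 := by
  by_contra! hcon
  refine derivKernel_ne_zero hz (hS.eq_zero_of_inner_left ℂ fun g hg => ?_)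
  rw [← deriv_hardyEval_eq_inner g hz, hcon g hg]

lemma AnalyticAt.of_eventuallyEq_mul {𝕜 : Type*} [NontriviallyNormedField 𝕜]
    {f u v : 𝕜 → 𝕜} {z : 𝕜} (hu : AnalyticAt 𝕜 u z) (hv : AnalyticAt 𝕜 v z) (hvz : v z ≠ 0)
    (huv : u =ᶠ[𝓝 z] fun x => f x * v x) : AnalyticAt 𝕜 f z := by
  refine (hu.div hv hvz).congr ?_
  filter_upwards [huv, hv.continuousAt.eventually_ne hvz] with x hx hvx
  rw [Pi.div_apply, hx, mul_div_cancel_right₀ _ hvx]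

/-- If the Liouville operator `A_f g = f·g′` (domain `{g ∈ H² : f·g′ ∈ H²}`) is
densely defined on `H²`, then the symbol `f` is analytic on the unit disc. -/
theorem symbol_analytic_of_densely_defined (f : ℂ → ℂ)
    (hdense : Dense {g : H2 | ∃ u : H2, ∀ z ∈ ball (0 : ℂ) 1,
      hardyEval u z = f z * deriv (hardyEval g) z}) :
    AnalyticOnNhd ℂ f (ball (0 : ℂ) 1) := by
  intro z₀ hz₀
  obtain ⟨g, ⟨u, hu⟩, hg⟩ := hdense.exists_deriv_hardyEval_ne_zero (mem_ball_zero_iff.mp hz₀)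
  exact (analyticOnNhd_hardyEval u z₀ hz₀).of_eventuallyEq_mul
    ((analyticOnNhd_hardyEval g).deriv z₀ hz₀) hg
    (eventually_of_mem (isOpen_ball.mem_nhds hz₀) hu)
end

section
/- Let f be the symbol of a densely defined Liouville operator A_f on H², and let γ : [0,T] → 𝔻 be a C¹ trajectory with γ̇(t) = f(γ(t)). Then the occupation kernel Γ_γ lies in the domain of A_f*, and A_f* Γ_γ = K_{γ(T)} − K_{γ(0)}, where K_w is the Szegő kernel. -/
open Metric ComplexConjugate

/-
Along a trajectory of `γ̇ = f(γ)` the integrand `(f · g′)(γ(t))` is the derivative of `g(γ(t))`,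
so `⟨A_f g, Γ_γ⟩ = ∫₀ᵀ (f g′)(γ t) dt = g(γ T) − g(γ 0)` by the fundamental theorem of calculus.
Since the Szegő kernel `K_w = (w̄ⁿ)ₙ` is square summable for `|w| < 1` and reproduces point
evaluation, `g(γ T) − g(γ 0) = ⟨g, K_{γ(T)} − K_{γ(0)}⟩`.
-/

section Flow

variable {f g u : ℂ → ℂ} {γ : ℝ → ℂ} {s : Set ℂ} {T : ℝ}

theorem hasDerivAt_comp_of_flow {t : ℝ} (hg : DifferentiableAt ℂ g (γ t))
    (hγ : HasDerivAt γ (f (γ t)) t) :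
    HasDerivAt (fun τ => g (γ τ)) (f (γ t) * deriv g (γ t)) t := by
  rw [mul_comm]
  exact hg.hasDerivAt.comp t hγ

theorem integral_eq_sub_of_flow (hT : 0 ≤ T) (hγs : ∀ t ∈ Set.Icc 0 T, γ t ∈ s)
    (hγ : ∀ t ∈ Set.Icc 0 T, HasDerivAt γ (f (γ t)) t)
    (hg : ∀ z ∈ s, DifferentiableAt ℂ g z) (hu : ∀ z ∈ s, ContinuousAt u z)
    (hug : ∀ z ∈ s, u z = f z * deriv g z) :
    ∫ t in (0 : ℝ)..T, u (γ t) = g (γ T) - g (γ 0) := by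
  apply intervalIntegral.integral_eq_sub_of_hasDerivAt
  · intro t ht
    rw [Set.uIcc_of_le hT] at ht
    rw [hug _ (hγs t ht)]
    exact hasDerivAt_comp_of_flow (hg _ (hγs t ht)) (hγ t ht)
  · refine ContinuousOn.intervalIntegrable fun t ht => ?_
    rw [Set.uIcc_of_le hT] at ht
    exact ((hu _ (hγs t ht)).comp (hγ t ht).continuousAt).continuousWithinAt

end Flow

theorem summable_mul_pow (h : H2) {z : ℂ} (hz : ‖z‖ < 1) :
    Summable fun n : ℕ => h n * z ^ n := by
  refine Summable.of_norm <| Summable.of_nonneg_of_le (fun n => norm_nonneg _) (fun n => ?_)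
    ((summable_geometric_of_lt_one (norm_nonneg z) hz).mul_left ‖h‖)
  rw [norm_mul, norm_pow]
  exact mul_le_mul_of_nonneg_right (lp.norm_apply_le_norm two_ne_zero h n) (by positivity)

noncomputable def hardySeries (h : H2) : FormalMultilinearSeries ℂ ℂ ℂ :=
  fun n => h n • ContinuousMultilinearMap.mkPiAlgebraFin ℂ n ℂ

theorem one_le_radius_hardySeries (h : H2) : 1 ≤ (hardySeries h).radius := by
  refine FormalMultilinearSeries.le_radius_of_bound _ ‖h‖ fun n => ?_
  simp only [hardySeries, norm_smul, ContinuousMultilinearMap.norm_mkPiAlgebraFin, mul_one,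
    NNReal.coe_one, one_pow]
  exact lp.norm_apply_le_norm two_ne_zero h n

theorem hasFPowerSeriesOnBall_hardyEval_s8 (h : H2) :
    HasFPowerSeriesOnBall (hardyEval h) (hardySeries h) 0 1 := by
  have hsum : (hardySeries h).sum = hardyEval h := by
    funext z
    simp [FormalMultilinearSeries.sum, hardySeries, hardyEval]
  rw [← hsum]
  exact ((hardySeries h).hasFPowerSeriesOnBall
    (zero_lt_one.trans_le (one_le_radius_hardySeries h))).mono zero_lt_one
    (one_le_radius_hardySeries h)

theorem differentiableAt_hardyEval (h : H2) {z : ℂ} (hz : z ∈ ball (0 : ℂ) 1) :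
    DifferentiableAt ℂ (hardyEval h) z :=
  ((hasFPowerSeriesOnBall_hardyEval_s8 h).analyticAt_of_mem
    (by rwa [← ENNReal.ofReal_one, Metric.eball_ofReal])).differentiableAt

theorem memℓp_two_pow {w : ℂ} (hw : ‖w‖ < 1) : Memℓp (fun n : ℕ => w ^ n) 2 := by
  refine memℓp_gen ((summable_geometric_of_lt_one (by positivity)
    (pow_lt_one₀ (norm_nonneg w) hw two_ne_zero)).congr fun n => ?_)
  rw [ENNReal.toReal_ofNat, Real.rpow_two, norm_pow, ← pow_mul, ← pow_mul, mul_comm]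

theorem hardyEval_sub_eq_tsum_mul_conj (h : H2) {z w : ℂ} (hz : ‖z‖ < 1) (hw : ‖w‖ < 1) :
    hardyEval h z - hardyEval h w =
      ∑' n : ℕ, h n * conj (conj z ^ n - conj w ^ n) := by
  simp only [map_sub, map_pow, Complex.conj_conj, mul_sub]
  exact ((summable_mul_pow h hz).tsum_sub (summable_mul_pow h hw)).symm

theorem adjoint_on_occupation_kernel_general (f : ℂ → ℂ)
    (T : ℝ) (hT : 0 < T) (γ : ℝ → ℂ)
    (hγmap : ∀ t ∈ Set.Icc (0 : ℝ) T, γ t ∈ ball (0 : ℂ) 1)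
    (hγode : ∀ t ∈ Set.Icc (0 : ℝ) T, HasDerivAt γ (f (γ t)) t)
    (Γ : H2)
    (hΓ : ∀ g : H2, ∑' n : ℕ, g n * conj (Γ n) = ∫ t in (0 : ℝ)..T, hardyEval g (γ t)) :
    Memℓp (fun n : ℕ => (conj (γ T)) ^ n - (conj (γ 0)) ^ n) 2 ∧
    ∀ g u : H2, (∀ z ∈ ball (0 : ℂ) 1, hardyEval u z = f z * deriv (hardyEval g) z) →
      ∑' n : ℕ, u n * conj (Γ n) =
      ∑' n : ℕ, g n * conj ((conj (γ T)) ^ n - (conj (γ 0)) ^ n) := by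
  have hT_lt : ‖γ T‖ < 1 := mem_ball_zero_iff.mp (hγmap T ⟨hT.le, le_rfl⟩)
  have h0_lt : ‖γ 0‖ < 1 := mem_ball_zero_iff.mp (hγmap 0 ⟨le_rfl, hT.le⟩)
  refine ⟨(memℓp_two_pow ((RCLike.norm_conj _).trans_lt hT_lt)).sub
    (memℓp_two_pow ((RCLike.norm_conj _).trans_lt h0_lt)), fun g u hu => ?_⟩
  rw [hΓ u, ← hardyEval_sub_eq_tsum_mul_conj g hT_lt h0_lt]
  exact integral_eq_sub_of_flow hT.le hγmap hγode (fun z hz => differentiableAt_hardyEval g hz)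
    (fun z hz => (differentiableAt_hardyEval u hz).continuousAt) hu

/-- If `A_f` is densely defined and `γ : [0,T] → 𝔻` solves `γ̇ = f(γ)`, then the
occupation kernel `Γ_γ` lies in the domain of `A_f*` and
`A_f* Γ_γ = K_{γ(T)} − K_{γ(0)}` (Szegő kernels `K_w(z) = Σ w̄ⁿ zⁿ`). -/
theorem adjoint_on_occupation_kernel (f : ℂ → ℂ)
    (hdense : Dense {g : H2 | ∃ u : H2, ∀ z ∈ ball (0 : ℂ) 1,
      hardyEval u z = f z * deriv (hardyEval g) z})
    (T : ℝ) (hT : 0 < T) (γ : ℝ → ℂ)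
    (hγmap : ∀ t ∈ Set.Icc (0 : ℝ) T, γ t ∈ ball (0 : ℂ) 1)
    (hγode : ∀ t ∈ Set.Icc (0 : ℝ) T, HasDerivAt γ (f (γ t)) t)
    (Γ : H2)
    (hΓ : ∀ g : H2, ∑' n : ℕ, g n * conj (Γ n) = ∫ t in (0 : ℝ)..T, hardyEval g (γ t)) :
    Memℓp (fun n : ℕ => (conj (γ T)) ^ n - (conj (γ 0)) ^ n) 2 ∧
    ∀ g u : H2, (∀ z ∈ ball (0 : ℂ) 1, hardyEval u z = f z * deriv (hardyEval g) z) →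
      ∑' n : ℕ, u n * conj (Γ n) =
      ∑' n : ℕ, g n * conj ((conj (γ T)) ^ n - (conj (γ 0)) ^ n) :=
  adjoint_on_occupation_kernel_general f T hT γ hγmap hγode Γ hΓ
end

section
/- For m ≥ 2, every λ ∈ ℂ is an eigenvalue of A_{z^m}*, the adjoint of the Liouville operator with symbol z^m on H², with eigenspace of dimension at least m−1: for each k ∈ {1,...,m−1}, the function H_k(z) = Σ_{n≥0} [ λⁿ / Π_{j=0}^{n−1}(k + j(m−1)) ] z^{k+n(m−1)} lies in H² and satisfies A_{z^m}* H_k = λ H_k. -/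
/-!
On the progression `k + n(m-1)` the eigenvalue equation `λ hᵢ = i h_{i+m-1}` is a first-order
recurrence, solved by the closed form of `Hcoef`. Off the progression both sides vanish: as
`k ≤ m - 1`, the index `i + (m - 1)` lies on it only if `i` does or `i = 0`. The denominator of
the closed form dominates `n!`, so the coefficients are bounded by `|λ|ⁿ/n!` and are even
absolutely summable. Finally, `H_k` is the only `H_j` with a nonzero coefficient at index `k`.
-/

open Metric ComplexConjugate Classical

/-- Taylor coefficients of `H_k(z) = Σₙ [λⁿ / Πⱼ₌₀^{n-1}(k+j(m−1))] z^{k+n(m−1)}`. -/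

noncomputable def Hcoef (m k : ℕ) (lam : ℂ) (i : ℕ) : ℂ :=
  if h : ∃ n : ℕ, i = k + n * (m - 1) then
    lam ^ h.choose / ∏ j ∈ Finset.range h.choose, ((k : ℂ) + (j : ℂ) * ((m : ℂ) - 1))
  else 0

open Finset Nat

section LinearIndependent

variable {ι α R : Type*} [DecidableEq ι] [Semiring R]

theorem linearIndependent_of_apply_eq_single {v : ι → α → R} (p : ι → α)
    (hv : ∀ i j, v j (p i) = (Pi.single j (1 : R) : ι → R) i) : LinearIndependent R v := by
  refine LinearIndependent.of_comp (LinearMap.funLeft R R p) ?_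
  convert Pi.linearIndependent_single_one ι R using 1
  ext j i
  exact hv i j

end LinearIndependent

theorem Nat.factorial_le_prod_range_add_mul {k d : ℕ} (hk : 1 ≤ k) (hd : 1 ≤ d) (n : ℕ) :
    n ! ≤ ∏ j ∈ range n, (k + j * d) := by
  rw [← prod_range_add_one_eq_factorial]
  refine prod_le_prod' fun j _ => ?_
  have : j ≤ j * d := Nat.le_mul_of_pos_right j hd
  omega

namespace Hcoef

variable {m k : ℕ} {lam : ℂ}

theorem apply_eq_zero_of_not_exists {i : ℕ} (h : ¬∃ n : ℕ, i = k + n * (m - 1)) :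
    Hcoef m k lam i = 0 :=
  dif_neg h

theorem apply_add_mul (hm : 2 ≤ m) (n : ℕ) :
    Hcoef m k lam (k + n * (m - 1)) =
      lam ^ n / ((∏ j ∈ range n, (k + j * (m - 1)) : ℕ) : ℂ) := by
  have hex : ∃ n' : ℕ, k + n * (m - 1) = k + n' * (m - 1) := ⟨n, rfl⟩
  have hchoose : hex.choose = n :=
    (Nat.eq_of_mul_eq_mul_right (by omega) (Nat.add_left_cancel hex.choose_spec)).symm
  rw [Hcoef, dif_pos hex, hchoose, Nat.cast_prod]
  congr 1
  refine prod_congr rfl fun j _ => ?_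
  push_cast [Nat.cast_sub (by omega : 1 ≤ m)]
  ring

theorem apply_self (hm : 2 ≤ m) : Hcoef m k lam k = 1 := by
  simpa using apply_add_mul (k := k) (lam := lam) hm 0

theorem apply_eq_zero_of_lt {i : ℕ} (hi : i < k + (m - 1)) (hik : i ≠ k) :
    Hcoef m k lam i = 0 := by
  refine apply_eq_zero_of_not_exists ?_
  rintro ⟨_ | n, rfl⟩
  · simp at hik
  · rw [succ_mul] at hi
    omega

theorem norm_apply_add_mul_le (hm : 2 ≤ m) (hk : 1 ≤ k) (n : ℕ) :
    ‖Hcoef m k lam (k + n * (m - 1))‖ ≤ ‖lam‖ ^ n / n ! := by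
  rw [apply_add_mul hm, norm_div, norm_pow, Complex.norm_natCast]
  gcongr
  exact_mod_cast factorial_le_prod_range_add_mul hk (by omega) n

theorem summable_norm (hm : 2 ≤ m) (hk : 1 ≤ k) : Summable fun i => ‖Hcoef m k lam i‖ := by
  have hinj : Function.Injective fun n : ℕ => k + n * (m - 1) := fun a b hab =>
    Nat.eq_of_mul_eq_mul_right (by omega) (Nat.add_left_cancel hab)
  have hsupport : ∀ i ∉ Set.range fun n : ℕ => k + n * (m - 1), ‖Hcoef m k lam i‖ = 0 :=
    fun i hi => by rw [apply_eq_zero_of_not_exists fun ⟨n, h⟩ => hi ⟨n, h.symm⟩, norm_zero]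
  rw [← hinj.summable_iff hsupport]
  exact .of_nonneg_of_le (fun _ => norm_nonneg _) (norm_apply_add_mul_le hm hk)
    (Real.summable_pow_div_factorial ‖lam‖)

theorem memℓp (hm : 2 ≤ m) (hk : 1 ≤ k) {p : ENNReal} (hp : 1 ≤ p) :
    Memℓp (Hcoef m k lam) p :=
  (memℓp_gen (by simpa using summable_norm hm hk)).of_exponent_ge hp

theorem natCast_mul_apply_add (hm : 2 ≤ m) (hk₁ : 1 ≤ k) (hk : k ≤ m - 1) (n : ℕ) :
    (n : ℂ) * Hcoef m k lam (n + (m - 1)) = lam * Hcoef m k lam n := by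
  by_cases hn : ∃ t : ℕ, n = k + t * (m - 1)
  · obtain ⟨t, rfl⟩ := hn
    rw [show k + t * (m - 1) + (m - 1) = k + (t + 1) * (m - 1) by ring,
      apply_add_mul hm, apply_add_mul hm, prod_range_succ, Nat.cast_mul]
    have hfactor : ((k + t * (m - 1) : ℕ) : ℂ) ≠ 0 := Nat.cast_ne_zero.mpr (by omega)
    have hprod : ((∏ j ∈ range t, (k + j * (m - 1)) : ℕ) : ℂ) ≠ 0 :=
      Nat.cast_ne_zero.mpr (prod_ne_zero_iff.mpr fun j _ => by omega)
    field_simp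
    ring
  · rw [apply_eq_zero_of_not_exists hn, mul_zero]
    rcases eq_or_ne n 0 with rfl | hn₀
    · simp
    rw [apply_eq_zero_of_not_exists, mul_zero]
    rintro ⟨_ | s, hs⟩
    · omega
    · exact hn ⟨s, by rw [succ_mul] at hs; omega⟩

end Hcoef

/-- For `m ≥ 2`, every `λ ∈ ℂ` is an eigenvalue of `A_{z^m}*` (which acts on Taylor
coefficients by `(hₙ) ↦ (n·h_{n+m−1})`) with eigenspace of dimension at least `m−1`:
for each `k ∈ {1,…,m−1}` the function `H_k` lies in `H²` and satisfies
`A_{z^m}* H_k = λ H_k`, and the `H_k` are linearly independent. -/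
theorem every_lambda_eigenvalue_adjoint_zm (m : ℕ) (hm : 2 ≤ m) (lam : ℂ) :
    (∀ k : ℕ, 1 ≤ k → k ≤ m - 1 →
      Memℓp (Hcoef m k lam) 2 ∧
      ∀ n : ℕ, (n : ℂ) * Hcoef m k lam (n + m - 1) = lam * Hcoef m k lam n) ∧
    LinearIndependent ℂ (fun k : Fin (m - 1) => Hcoef m ((k : ℕ) + 1) lam) := by
  refine ⟨fun k hk₁ hk => ⟨Hcoef.memℓp hm hk₁ one_le_two, fun n => ?_⟩, ?_⟩
  · rw [show n + m - 1 = n + (m - 1) by omega]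
    exact Hcoef.natCast_mul_apply_add hm hk₁ hk n
  · refine linearIndependent_of_apply_eq_single (fun i => (i : ℕ) + 1) fun i j => ?_
    rcases eq_or_ne i j with rfl | hij
    · simp [Hcoef.apply_self hm]
    · rw [Pi.single_eq_of_ne hij]
      exact Hcoef.apply_eq_zero_of_lt (by omega) (by simpa [Fin.ext_iff] using hij)
end

section
/- If A_{f,φ} is a bounded Liouville weighted composition operator on H², then sup over w ∈ 𝔻 of |f(w)|² |φ′(w)|² (1 − |w|²) (1 + |φ(w)|²)/(1 − |φ(w)|²)³ is finite; indeed this quantity is bounded by ‖A_{f,φ}‖² for each w. -/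
open Metric ComplexConjugate

/-! Evaluation at `w` is the inner product with the Szegő kernel `K_w = (conj w ^ n)ₙ`, and
differentiation at `v` is the inner product with `K⁽¹⁾_v = (conj (n v ^ (n - 1)))ₙ`. The defining
identity of `A` therefore says `A† K_w = conj (f w φ'(w)) • K⁽¹⁾_{φ w}`, so `‖A† K_w‖ ≤ ‖A‖ ‖K_w‖`
together with `‖K_w‖² = (1 - |w|²)⁻¹` and `‖K⁽¹⁾_v‖² = (1 + |v|²) / (1 - |v|²)³` is the claim. -/

open scoped InnerProduct InnerProductSpace

section GeometricSeries

variable {𝕜 : Type*} [NormedField 𝕜] {r : 𝕜}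

-- `n - 1` truncates at `n = 0`, where the factor `n` vanishes anyway.
lemma hasSum_nat_mul_pow_pred (hr : ‖r‖ < 1) :
    HasSum (fun n : ℕ => (n : 𝕜) * r ^ (n - 1)) (1 / (1 - r) ^ 2) := by
  rw [← hasSum_nat_add_iff' 1]
  simpa using hasSum_choose_mul_geometric_of_norm_lt_one 1 hr

lemma hasSum_nat_sq_mul_pow_pred (hr : ‖r‖ < 1) :
    HasSum (fun n : ℕ => (n : 𝕜) ^ 2 * r ^ (n - 1)) ((1 + r) / (1 - r) ^ 3) := by
  have hr1 : 1 - r ≠ 0 := fun h => by simp [← sub_eq_zero.mp h] at hr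
  rw [← hasSum_nat_add_iff' 1]
  -- `(n + 1)² = 2 (n + 2).choose 2 - (n + 1).choose 1`
  convert ((hasSum_choose_mul_geometric_of_norm_lt_one 2 hr).mul_left 2).sub
    (hasSum_choose_mul_geometric_of_norm_lt_one 1 hr) using 1
  · funext n
    have h := congrArg (Nat.cast (R := 𝕜)) (Nat.add_one_mul_choose_eq (n + 1) 1)
    simp only [Nat.choose_one_right, Nat.add_sub_cancel] at h ⊢
    push_cast at h ⊢
    linear_combination r ^ n * h
  · rw [Finset.sum_range_one, Nat.cast_zero, zero_pow two_ne_zero, zero_mul, sub_zero]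
    field_simp
    ring

end GeometricSeries

section lpTwo

variable {ι : Type*} {E : ι → Type*} [∀ i, NormedAddCommGroup (E i)]

lemma memℓp_two_of_summable_norm_sq {f : ∀ i, E i} (hf : Summable fun i => ‖f i‖ ^ 2) :
    Memℓp f 2 :=
  memℓp_gen (by simpa using hf)

lemma lp.norm_sq_eq_tsum (f : lp E 2) : ‖f‖ ^ 2 = ∑' i, ‖f i‖ ^ 2 := by
  simpa using lp.norm_rpow_eq_tsum (p := 2) (by norm_num) f

end lpTwo

lemma norm_conj_pow_sq (w : ℂ) (n : ℕ) : ‖conj w ^ n‖ ^ 2 = (‖w‖ ^ 2) ^ n := by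
  rw [norm_pow, RCLike.norm_conj, ← pow_mul, ← pow_mul, mul_comm]

noncomputable def szegoKernel (w : ℂ) (hw : ‖w‖ < 1) : H2 :=
  ⟨fun n => conj w ^ n, memℓp_two_of_summable_norm_sq <| by
    simpa only [norm_conj_pow_sq] using
      summable_geometric_of_lt_one (by positivity) (pow_lt_one₀ (norm_nonneg w) hw two_ne_zero)⟩

lemma norm_szegoKernel_sq {w : ℂ} (hw : ‖w‖ < 1) :
    ‖szegoKernel w hw‖ ^ 2 = (1 - ‖w‖ ^ 2)⁻¹ := by
  rw [lp.norm_sq_eq_tsum]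
  simp only [szegoKernel, norm_conj_pow_sq]
  exact tsum_geometric_of_lt_one (by positivity) (pow_lt_one₀ (norm_nonneg w) hw two_ne_zero)

lemma inner_szegoKernel {w : ℂ} (hw : ‖w‖ < 1) (h : H2) :
    ⟪szegoKernel w hw, h⟫_ℂ = hardyEval h w := by
  rw [lp.inner_eq_tsum]
  refine tsum_congr fun n => ?_
  simp [szegoKernel, mul_comm]

lemma norm_nat_mul_pow_pred_sq (v : ℂ) (n : ℕ) :
    ‖(n : ℂ) * v ^ (n - 1)‖ ^ 2 = (n : ℝ) ^ 2 * (‖v‖ ^ 2) ^ (n - 1) := by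
  rw [norm_mul, norm_pow, Complex.norm_natCast, mul_pow, ← pow_mul, ← pow_mul, mul_comm 2]

lemma hasSum_norm_nat_mul_pow_pred_sq {v : ℂ} (hv : ‖v‖ < 1) :
    HasSum (fun n : ℕ => ‖(n : ℂ) * v ^ (n - 1)‖ ^ 2)
      ((1 + ‖v‖ ^ 2) / (1 - ‖v‖ ^ 2) ^ 3) := by
  simp only [norm_nat_mul_pow_pred_sq]
  refine hasSum_nat_sq_mul_pow_pred ?_
  rw [norm_pow, norm_norm]
  exact pow_lt_one₀ (norm_nonneg v) hv two_ne_zero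

noncomputable def derivSzegoKernel (v : ℂ) (hv : ‖v‖ < 1) : H2 :=
  ⟨fun n => conj ((n : ℂ) * v ^ (n - 1)), memℓp_two_of_summable_norm_sq <| by
    simpa only [RCLike.norm_conj] using (hasSum_norm_nat_mul_pow_pred_sq hv).summable⟩

lemma norm_derivSzegoKernel_sq {v : ℂ} (hv : ‖v‖ < 1) :
    ‖derivSzegoKernel v hv‖ ^ 2 = (1 + ‖v‖ ^ 2) / (1 - ‖v‖ ^ 2) ^ 3 := by
  rw [lp.norm_sq_eq_tsum]
  simp only [derivSzegoKernel, RCLike.norm_conj]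
  exact (hasSum_norm_nat_mul_pow_pred_sq hv).tsum_eq

lemma hasDerivAt_hardyEval_s19 (h : H2) {v : ℂ} (hv : ‖v‖ < 1) :
    HasDerivAt (hardyEval h) ⟪derivSzegoKernel v hv, h⟫_ℂ v := by
  obtain ⟨R, hvR, hR1⟩ := exists_between hv
  have hR0 : 0 < R := (norm_nonneg v).trans_lt hvR
  have hinner : ⟪derivSzegoKernel v hv, h⟫_ℂ = ∑' n : ℕ, h n * ((n : ℂ) * v ^ (n - 1)) := by
    rw [lp.inner_eq_tsum]
    refine tsum_congr fun n => ?_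
    simp [derivSzegoKernel, mul_comm]
  have hR1' : ‖R‖ < 1 := by rwa [Real.norm_of_nonneg hR0.le]
  rw [hinner]
  refine hasDerivAt_tsum_of_isPreconnected ((hasSum_nat_mul_pow_pred hR1').summable.mul_left ‖h‖)
    isOpen_ball (convex_ball 0 R).isPreconnected
    (fun n y _ => (hasDerivAt_pow n y).const_mul (h n)) (fun n y hy => ?_)
    (mem_ball_self hR0) (hasSum_single 0 fun n hn => by simp [hn]).summable
    (mem_ball_zero_iff.mpr hvR)
  rw [mem_ball_zero_iff] at hy
  rw [norm_mul, norm_mul, norm_pow, Complex.norm_natCast]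
  gcongr
  exact lp.norm_apply_le_norm two_ne_zero h n

lemma adjoint_szegoKernel {A : H2 →L[ℂ] H2} {w v c : ℂ} (hw : ‖w‖ < 1) (hv : ‖v‖ < 1)
    (hA : ∀ g : H2, hardyEval (A g) w = c * deriv (hardyEval g) v) :
    (A†) (szegoKernel w hw) = conj c • derivSzegoKernel v hv :=
  ext_inner_right ℂ fun g => by
    rw [ContinuousLinearMap.adjoint_inner_left, inner_szegoKernel, hA, inner_smul_left,
      Complex.conj_conj, (hasDerivAt_hardyEval_s19 g hv).deriv]

theorem weighted_bounded_necessary_general (f φ : ℂ → ℂ)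
    (hφmap : ∀ z ∈ ball (0 : ℂ) 1, φ z ∈ ball (0 : ℂ) 1)
    (A : H2 →L[ℂ] H2)
    (hA : ∀ g : H2, ∀ z ∈ ball (0 : ℂ) 1,
      hardyEval (A g) z = f z * deriv φ z * deriv (hardyEval g) (φ z)) :
    ∀ w ∈ ball (0 : ℂ) 1,
      ‖f w‖ ^ 2 * ‖deriv φ w‖ ^ 2 * (1 - ‖w‖ ^ 2) *
        ((1 + ‖φ w‖ ^ 2) / (1 - ‖φ w‖ ^ 2) ^ 3) ≤ ‖A‖ ^ 2 := by
  intro w hw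
  have hw1 : ‖w‖ < 1 := mem_ball_zero_iff.mp hw
  have hφw : ‖φ w‖ < 1 := mem_ball_zero_iff.mp (hφmap w hw)
  have hbound : ‖(A†) (szegoKernel w hw1)‖ ≤ ‖A‖ * ‖szegoKernel w hw1‖ := by
    simpa only [LinearIsometryEquiv.norm_map] using (A†).le_opNorm (szegoKernel w hw1)
  rw [adjoint_szegoKernel hw1 hφw (hA · w hw), norm_smul, RCLike.norm_conj] at hbound
  have hsq := pow_le_pow_left₀ (by positivity) hbound 2
  rw [mul_pow, mul_pow, norm_derivSzegoKernel_sq, norm_szegoKernel_sq, norm_mul, mul_pow] at hsq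
  have hw2 : 0 < 1 - ‖w‖ ^ 2 := sub_pos.mpr (pow_lt_one₀ (norm_nonneg w) hw1 two_ne_zero)
  calc _ = ‖f w‖ ^ 2 * ‖deriv φ w‖ ^ 2 * ((1 + ‖φ w‖ ^ 2) / (1 - ‖φ w‖ ^ 2) ^ 3) *
          (1 - ‖w‖ ^ 2) := by ring
    _ ≤ ‖A‖ ^ 2 * (1 - ‖w‖ ^ 2)⁻¹ * (1 - ‖w‖ ^ 2) := by gcongr
    _ = ‖A‖ ^ 2 := by field_simp

/-- If `A_{f,φ}` is a bounded Liouville weighted composition operator on `H²`, then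
for every `w ∈ 𝔻`,
`|f(w)|²|φ′(w)|²(1−|w|²)(1+|φ(w)|²)/(1−|φ(w)|²)³ ≤ ‖A_{f,φ}‖²`;
in particular the supremum of this quantity over the disc is finite. -/
theorem weighted_bounded_necessary (f φ : ℂ → ℂ)
    (hf : AnalyticOnNhd ℂ f (ball (0 : ℂ) 1))
    (hφ : AnalyticOnNhd ℂ φ (ball (0 : ℂ) 1))
    (hφmap : ∀ z ∈ ball (0 : ℂ) 1, φ z ∈ ball (0 : ℂ) 1)
    (A : H2 →L[ℂ] H2)
    (hA : ∀ g : H2, ∀ z ∈ ball (0 : ℂ) 1,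
      hardyEval (A g) z = f z * deriv φ z * deriv (hardyEval g) (φ z)) :
    ∀ w ∈ ball (0 : ℂ) 1,
      ‖f w‖ ^ 2 * ‖deriv φ w‖ ^ 2 * (1 - ‖w‖ ^ 2) *
        ((1 + ‖φ w‖ ^ 2) / (1 - ‖φ w‖ ^ 2) ^ 3) ≤ ‖A‖ ^ 2 :=
  weighted_bounded_necessary_general f φ hφmap A hA
end
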